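/- Let f : ℝ → ℝ be smooth with antiderivative F (F' = f), let u : ℝ × ℝ → ℝ be a smooth solution of the generalized quasilinear KdV equation u_t + u² u_{xxx} + 4 u u_x u_{xx} + u_x³ + f'(u) u_x = 0, and let a < b be real. Then for every t, d/dt ∫_a^b ( ½ u² u_x² − F(u) ) dx = −[ −½ u⁴ u_{xx}² − u³ u_x² u_{xx} − ½ u² u_x⁴ − u² u_t u_x − f(u) u² u_{xx} − f(u) u u_x² − ½ f(u)² ]_{x=a}^{x=b}, i.e., the rate of change of the energy ∫_a^b (½ u² u_x² − F(u)) dx equals minus the net energy flux through the endpoints. -/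

import Mathlib

/-- Partial derivative with respect to the first (time) variable. -/
noncomputable def pdt (u : ℝ × ℝ → ℝ) (p : ℝ × ℝ) : ℝ :=
  deriv (fun s => u (s, p.2)) p.1

/-- Partial derivative with respect to the second (space) variable. -/
noncomputable def pdx (u : ℝ × ℝ → ℝ) (p : ℝ × ℝ) : ℝ :=
  deriv (fun s => u (p.1, s)) p.2

/-- Left-hand side of the generalized quasilinear KdV equation
`u_t + u² u_{xxx} + 4 u u_x u_{xx} + u_x³ + f'(u) u_x`. -/
noncomputable def kdvLHS (f : ℝ → ℝ) (u : ℝ × ℝ → ℝ) (p : ℝ × ℝ) : ℝ :=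
  pdt u p + (u p) ^ 2 * pdx (pdx (pdx u)) p + 4 * u p * pdx u p * pdx (pdx u) p
    + (pdx u p) ^ 3 + deriv f (u p) * pdx u p

/-- Energy flux `X₃`. -/
noncomputable def X3 (f : ℝ → ℝ) (u : ℝ × ℝ → ℝ) (p : ℝ × ℝ) : ℝ :=
  -(1 / 2) * (u p) ^ 4 * (pdx (pdx u) p) ^ 2
    - (u p) ^ 3 * (pdx u p) ^ 2 * pdx (pdx u) p
    - (1 / 2) * (u p) ^ 2 * (pdx u p) ^ 4
    - (u p) ^ 2 * pdt u p * pdx u p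
    - f (u p) * (u p) ^ 2 * pdx (pdx u) p
    - f (u p) * u p * (pdx u p) ^ 2
    - (1 / 2) * (f (u p)) ^ 2

namespace EnergyBalanceAux

/-- `∂/∂t` as evaluation of the Fréchet derivative. -/
noncomputable def pd1 (g : ℝ × ℝ → ℝ) (p : ℝ × ℝ) : ℝ := fderiv ℝ g p (1, 0)

/-- `∂/∂x` as evaluation of the Fréchet derivative. -/
noncomputable def pd2 (g : ℝ × ℝ → ℝ) (p : ℝ × ℝ) : ℝ := fderiv ℝ g p (0, 1)

theorem hasDerivAt_slice2 (g : ℝ × ℝ → ℝ) (hg : ContDiff ℝ (⊤ : ℕ∞) g) (q y : ℝ) :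
    HasDerivAt (fun y => g (q, y)) (pd2 g (q, y)) y := by
  have h := (hg.differentiable (by simp) (q, y)).hasFDerivAt
  have hline : HasDerivAt (fun y : ℝ => ((q : ℝ), y)) ((0 : ℝ), (1 : ℝ)) y :=
    (hasDerivAt_const _ _).prodMk (hasDerivAt_id _)
  exact h.comp_hasDerivAt y hline

theorem hasDerivAt_slice1 (g : ℝ × ℝ → ℝ) (hg : ContDiff ℝ (⊤ : ℕ∞) g) (s x : ℝ) :
    HasDerivAt (fun s => g (s, x)) (pd1 g (s, x)) s := by
  have h := (hg.differentiable (by simp) (s, x)).hasFDerivAt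
  have hline : HasDerivAt (fun s : ℝ => (s, (x : ℝ))) ((1 : ℝ), (0 : ℝ)) s :=
    (hasDerivAt_id _).prodMk (hasDerivAt_const _ _)
  exact h.comp_hasDerivAt s hline

theorem pdx_eq (g : ℝ × ℝ → ℝ) (hg : ContDiff ℝ (⊤ : ℕ∞) g) : pdx g = pd2 g := by
  funext p
  exact (hasDerivAt_slice2 g hg p.1 p.2).deriv

theorem pdt_eq (g : ℝ × ℝ → ℝ) (hg : ContDiff ℝ (⊤ : ℕ∞) g) : pdt g = pd1 g := by
  funext p
  exact (hasDerivAt_slice1 g hg p.1 p.2).deriv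

theorem contDiff_pd1 (g : ℝ × ℝ → ℝ) (hg : ContDiff ℝ (⊤ : ℕ∞) g) : ContDiff ℝ (⊤ : ℕ∞) (pd1 g) :=
  (hg.fderiv_right (by simp)).clm_apply contDiff_const

theorem contDiff_pd2 (g : ℝ × ℝ → ℝ) (hg : ContDiff ℝ (⊤ : ℕ∞) g) : ContDiff ℝ (⊤ : ℕ∞) (pd2 g) :=
  (hg.fderiv_right (by simp)).clm_apply contDiff_const

theorem clairaut (g : ℝ × ℝ → ℝ) (hg : ContDiff ℝ (⊤ : ℕ∞) g) (p : ℝ × ℝ) :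
    pd1 (pd2 g) p = pd2 (pd1 g) p := by
  have hd : DifferentiableAt ℝ (fderiv ℝ g) p :=
    ((hg.fderiv_right (m := 1) (by exact (WithTop.coe_le_coe.mpr le_top : (((1 + 1 : ℕ) : ℕ∞) : WithTop ℕ∞) ≤ ((⊤ : ℕ∞) : WithTop ℕ∞)))).differentiable one_ne_zero) p
  have key : ∀ z : ℝ × ℝ, fderiv ℝ (fun q => fderiv ℝ g q z) p
      = (ContinuousLinearMap.apply ℝ ℝ z).comp (fderiv ℝ (fderiv ℝ g) p) := fun z =>
    (((ContinuousLinearMap.apply ℝ ℝ z).hasFDerivAt).comp p hd.hasFDerivAt).fderiv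
  have hsymm : IsSymmSndFDerivAt ℝ g p := (hg.contDiffAt).isSymmSndFDerivAt (by simp; rw [← WithTop.coe_ofNat]; exact WithTop.coe_le_coe.mpr le_top)
  have h2 : pd2 g = fun q => fderiv ℝ g q (0, 1) := rfl
  have h1 : pd1 g = fun q => fderiv ℝ g q (1, 0) := rfl
  show fderiv ℝ (pd2 g) p (1, 0) = fderiv ℝ (pd1 g) p (0, 1)
  rw [h1, h2, key, key]
  simpa using hsymm (1, 0) (0, 1)

/-- Time derivative of the energy density. -/
noncomputable def Tt (f : ℝ → ℝ) (u : ℝ × ℝ → ℝ) (p : ℝ × ℝ) : ℝ :=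
  u p * pd1 u p * (pd2 u p) ^ 2 + (u p) ^ 2 * pd2 u p * pd1 (pd2 u) p - f (u p) * pd1 u p

end EnergyBalanceAux

open EnergyBalanceAux in
/-- Energy balance: for a smooth solution of the generalized quasilinear KdV equation,
the rate of change of the energy `∫_a^b (½ u² u_x² − F(u)) dx` equals minus the net
energy flux `X₃` through the endpoints. -/
theorem energy_balance (f F : ℝ → ℝ) (hf : ContDiff ℝ (⊤ : ℕ∞) f)
    (hF : ContDiff ℝ (⊤ : ℕ∞) F) (hF' : ∀ s : ℝ, deriv F s = f s)
    (u : ℝ × ℝ → ℝ) (hu : ContDiff ℝ (⊤ : ℕ∞) u)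
    (hsol : ∀ p : ℝ × ℝ, kdvLHS f u p = 0)
    (a b : ℝ) (hab : a < b) (t : ℝ) :
    HasDerivAt
      (fun s => ∫ x in a..b, ((1 / 2) * (u (s, x)) ^ 2 * (pdx u (s, x)) ^ 2 - F (u (s, x))))
      (-(X3 f u (t, b) - X3 f u (t, a))) t := by
  -- smoothness of the various derivatives
  have hux : ContDiff ℝ (⊤ : ℕ∞) (pd2 u) := contDiff_pd2 u hu
  have huxx : ContDiff ℝ (⊤ : ℕ∞) (pd2 (pd2 u)) := contDiff_pd2 _ hux
  have huxxx : ContDiff ℝ (⊤ : ℕ∞) (pd2 (pd2 (pd2 u))) := contDiff_pd2 _ huxx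
  have hut : ContDiff ℝ (⊤ : ℕ∞) (pd1 u) := contDiff_pd1 u hu
  have hutx : ContDiff ℝ (⊤ : ℕ∞) (pd2 (pd1 u)) := contDiff_pd2 _ hut
  have huxt : ContDiff ℝ (⊤ : ℕ∞) (pd1 (pd2 u)) := contDiff_pd1 _ hux
  have hfu : ContDiff ℝ (⊤ : ℕ∞) (fun p => f (u p)) := hf.comp hu
  -- rewrite pdx/pdt in terms of pd1/pd2
  have e1 : pdx u = pd2 u := pdx_eq u hu
  have e2 : pdt u = pd1 u := pdt_eq u hu
  have e3 : pdx (pdx u) = pd2 (pd2 u) := by rw [e1, pdx_eq _ hux]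
  have e4 : pdx (pdx (pdx u)) = pd2 (pd2 (pd2 u)) := by rw [e3, pdx_eq _ huxx]
  -- the PDE in pd form
  have hE : ∀ p : ℝ × ℝ, pd1 u p + (u p) ^ 2 * pd2 (pd2 (pd2 u)) p
      + 4 * u p * pd2 u p * pd2 (pd2 u) p + (pd2 u p) ^ 3 + deriv f (u p) * pd2 u p = 0 := by
    intro p
    have := hsol p
    rwa [kdvLHS, e4, e3, e2, e1] at this
  -- continuity of Tt
  have hcu : Continuous u := hu.continuous
  have hcux : Continuous (pd2 u) := hux.continuous
  have hcuxt : Continuous (pd1 (pd2 u)) := huxt.continuous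
  have hcut : Continuous (pd1 u) := hut.continuous
  have hcf : Continuous f := hf.continuous
  have hcF : Continuous F := hF.continuous
  have hTtc : Continuous (Tt f u) := by
    unfold Tt
    fun_prop
  -- slice derivative in time of the energy density
  have hTt : ∀ (s x : ℝ),
      HasDerivAt (fun s => (1 / 2) * (u (s, x)) ^ 2 * (pd2 u (s, x)) ^ 2 - F (u (s, x)))
        (Tt f u (s, x)) s := by
    intro s x
    have hU := hasDerivAt_slice1 u hu s x
    have hUx := hasDerivAt_slice1 (pd2 u) hux s x
    have hFU : HasDerivAt (fun s => F (u (s, x))) (f (u (s, x)) * pd1 u (s, x)) s := by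
      have hF1 : HasDerivAt F (f (u (s, x))) (u (s, x)) := by
        rw [← hF' (u (s, x))]
        exact (hF.differentiable (by simp) (u (s, x))).hasDerivAt
      exact hF1.comp s hU
    have H := (((hU.fun_pow 2).const_mul ((1:ℝ)/2)).mul (hUx.fun_pow 2)).sub hFU
    refine H.congr_deriv ?_
    unfold Tt
    ring
  -- slice derivative in space of X3 is -Tt (uses the PDE and Clairaut)
  have hX3 : ∀ (s y : ℝ), HasDerivAt (fun y => X3 f u (s, y)) (-(Tt f u (s, y))) y := by
    intro s y
    have hU := hasDerivAt_slice2 u hu s y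
    have hUx := hasDerivAt_slice2 (pd2 u) hux s y
    have hUxx := hasDerivAt_slice2 (pd2 (pd2 u)) huxx s y
    have hUt := hasDerivAt_slice2 (pd1 u) hut s y
    have hfU : HasDerivAt (fun y => f (u (s, y))) (deriv f (u (s, y)) * pd2 u (s, y)) y :=
      ((hf.differentiable (by simp) (u (s, y))).hasDerivAt).comp y hU
    have H :
        HasDerivAt (fun y =>
          -(1 / 2) * (u (s, y)) ^ 4 * (pd2 (pd2 u) (s, y)) ^ 2
            - (u (s, y)) ^ 3 * (pd2 u (s, y)) ^ 2 * pd2 (pd2 u) (s, y)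
            - (1 / 2) * (u (s, y)) ^ 2 * (pd2 u (s, y)) ^ 4
            - (u (s, y)) ^ 2 * pd1 u (s, y) * pd2 u (s, y)
            - f (u (s, y)) * (u (s, y)) ^ 2 * pd2 (pd2 u) (s, y)
            - f (u (s, y)) * u (s, y) * (pd2 u (s, y)) ^ 2
            - (1 / 2) * (f (u (s, y))) ^ 2)
          ((-(1 / 2) * (4 * (u (s, y)) ^ 3 * pd2 u (s, y)) * (pd2 (pd2 u) (s, y)) ^ 2
              + -(1 / 2) * (u (s, y)) ^ 4 * (2 * pd2 (pd2 u) (s, y) * pd2 (pd2 (pd2 u)) (s, y)))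
            - ((3 * (u (s, y)) ^ 2 * pd2 u (s, y) * (pd2 u (s, y)) ^ 2
                + (u (s, y)) ^ 3 * (2 * pd2 u (s, y) * pd2 (pd2 u) (s, y))) * pd2 (pd2 u) (s, y)
                + (u (s, y)) ^ 3 * (pd2 u (s, y)) ^ 2 * pd2 (pd2 (pd2 u)) (s, y))
            - ((1 / 2) * (2 * u (s, y) * pd2 u (s, y)) * (pd2 u (s, y)) ^ 4
                + (1 / 2) * (u (s, y)) ^ 2 * (4 * (pd2 u (s, y)) ^ 3 * pd2 (pd2 u) (s, y)))
            - ((2 * u (s, y) * pd2 u (s, y) * pd1 u (s, y)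
                + (u (s, y)) ^ 2 * pd2 (pd1 u) (s, y)) * pd2 u (s, y)
                + (u (s, y)) ^ 2 * pd1 u (s, y) * pd2 (pd2 u) (s, y))
            - ((deriv f (u (s, y)) * pd2 u (s, y) * (u (s, y)) ^ 2
                + f (u (s, y)) * (2 * u (s, y) * pd2 u (s, y))) * pd2 (pd2 u) (s, y)
                + f (u (s, y)) * (u (s, y)) ^ 2 * pd2 (pd2 (pd2 u)) (s, y))
            - ((deriv f (u (s, y)) * pd2 u (s, y) * u (s, y)
                + f (u (s, y)) * pd2 u (s, y)) * (pd2 u (s, y)) ^ 2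
                + f (u (s, y)) * u (s, y) * (2 * pd2 u (s, y) * pd2 (pd2 u) (s, y)))
            - (1 / 2) * (2 * f (u (s, y)) * (deriv f (u (s, y)) * pd2 u (s, y))))
          y := by
      have t1 := ((hU.fun_pow 4).const_mul (-(1 / 2) : ℝ)).mul (hUxx.fun_pow 2)
      have t2 := ((hU.fun_pow 3).mul (hUx.fun_pow 2)).mul hUxx
      have t3 := ((hU.fun_pow 2).const_mul ((1 / 2) : ℝ)).mul (hUx.fun_pow 4)
      have t4 := ((hU.fun_pow 2).mul hUt).mul hUx
      have t5 := (hfU.mul (hU.fun_pow 2)).mul hUxx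
      have t6 := (hfU.mul hU).mul (hUx.fun_pow 2)
      have t7 := (hfU.fun_pow 2).const_mul ((1 / 2) : ℝ)
      have := ((((((t1.sub t2).sub t3).sub t4).sub t5).sub t6).sub t7)
      exact this.congr_deriv (by simp only [Pi.mul_apply]; ring)
    have hfun : (fun y => X3 f u (s, y)) = fun y =>
        -(1 / 2) * (u (s, y)) ^ 4 * (pd2 (pd2 u) (s, y)) ^ 2
          - (u (s, y)) ^ 3 * (pd2 u (s, y)) ^ 2 * pd2 (pd2 u) (s, y)
          - (1 / 2) * (u (s, y)) ^ 2 * (pd2 u (s, y)) ^ 4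
          - (u (s, y)) ^ 2 * pd1 u (s, y) * pd2 u (s, y)
          - f (u (s, y)) * (u (s, y)) ^ 2 * pd2 (pd2 u) (s, y)
          - f (u (s, y)) * u (s, y) * (pd2 u (s, y)) ^ 2
          - (1 / 2) * (f (u (s, y))) ^ 2 := by
      funext y
      rw [X3, e3, e2, e1]
    rw [hfun]
    convert H using 1
    have hcl := clairaut u hu (s, y)
    have hEp := hE (s, y)
    unfold Tt
    linear_combination (u (s, y) * (pd2 u (s, y)) ^ 2 + (u (s, y)) ^ 2 * pd2 (pd2 u) (s, y)
      + f (u (s, y))) * hEp - (u (s, y)) ^ 2 * pd2 u (s, y) * hcl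
  -- rewrite the integrand using pd2
  have hint : (fun s => ∫ x in a..b,
        ((1 / 2) * (u (s, x)) ^ 2 * (pdx u (s, x)) ^ 2 - F (u (s, x))))
      = fun s => ∫ x in a..b, ((1 / 2) * (u (s, x)) ^ 2 * (pd2 u (s, x)) ^ 2 - F (u (s, x))) := by
    simp only [e1]
  rw [hint]
  -- the derivative of the integral is the integral of Tt
  have hcont : Continuous fun p : ℝ × ℝ =>
      (1 / 2) * (u p) ^ 2 * (pd2 u p) ^ 2 - F (u p) := by fun_prop
  -- bound for Tt on a compact set
  obtain ⟨C, hC⟩ : ∃ C, ∀ p ∈ (Set.Icc (t - 1) (t + 1)) ×ˢ (Set.uIcc a b),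
      ‖Tt f u p‖ ≤ C := by
    have hK : IsCompact ((Set.Icc (t - 1) (t + 1)) ×ˢ (Set.uIcc a b)) :=
      isCompact_Icc.prod isCompact_uIcc
    exact hK.exists_bound_of_continuousOn hTtc.continuousOn
  have key := intervalIntegral.hasDerivAt_integral_of_dominated_loc_of_deriv_le
    (F := fun s x => (1 / 2) * (u (s, x)) ^ 2 * (pd2 u (s, x)) ^ 2 - F (u (s, x)))
    (F' := fun s x => Tt f u (s, x)) (x₀ := t) (a := a) (b := b)
    (bound := fun _ => C) (s := Metric.ball t 1) (μ := MeasureTheory.volume) (Metric.ball_mem_nhds t one_pos)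
    (Filter.Eventually.of_forall fun s =>
      ((hcont.comp (Continuous.prodMk_right s)).aestronglyMeasurable))
    ((hcont.comp (Continuous.prodMk_right t)).intervalIntegrable a b)
    ((hTtc.comp (Continuous.prodMk_right t)).aestronglyMeasurable)
    (Filter.Eventually.of_forall fun x hx s hs => by
      refine hC (s, x) ⟨?_, ?_⟩
      · have := Metric.mem_ball.mp hs
        rw [Real.dist_eq] at this
        constructor <;> [linarith [abs_lt.mp this |>.1]; linarith [abs_lt.mp this |>.2]]
      · exact Set.uIoc_subset_uIcc hx)
    (intervalIntegrable_const)
    (Filter.Eventually.of_forall fun x _ s _ => hTt s x)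
  -- identify the two derivative values
  have hval : (∫ x in a..b, Tt f u (t, x)) = -(X3 f u (t, b) - X3 f u (t, a)) := by
    have : (∫ x in a..b, Tt f u (t, x)) = -(∫ x in a..b, -(Tt f u (t, x))) := by
      rw [intervalIntegral.integral_neg]; ring
    rw [this]
    have := intervalIntegral.integral_eq_sub_of_hasDerivAt
      (f := fun y => X3 f u (t, y)) (f' := fun y => -(Tt f u (t, y)))
      (fun y _ => hX3 t y)
      (((hTtc.comp (Continuous.prodMk_right t)).neg).intervalIntegrable a b)
    rw [this]
  rw [← hval]
  exact key.2
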